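/- Let G be the graph on 10 vertices obtained from the triangular prism by subdividing two of its three non-triangular edges twice each. Then the complement cG contains a K_{3,3,1,1} minor. -/
import Mathlib


/-- `H` is a minor of `G`: there are pairwise disjoint nonempty branch sets in `G`,
one for each vertex of `H`, each inducing a connected subgraph, such that every edge
of `H` is realized by an edge of `G` between the corresponding branch sets. -/
def SimpleGraph.HasMinor {α β : Type*} (G : SimpleGraph α) (H : SimpleGraph β) : Prop :=
  ∃ f : β → Set α,
    (∀ b, (f b).Nonempty) ∧
    (∀ b, (G.induce (f b)).Connected) ∧
    (∀ b b', b ≠ b' → Disjoint (f b) (f b')) ∧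
    (∀ b b', H.Adj b b' → ∃ a ∈ f b, ∃ a' ∈ f b', G.Adj a a')
/-- The complete 4-partite graph `K_{3,3,1,1}`. -/
def K3311 : SimpleGraph ((i : Fin 4) × ![Fin 3, Fin 3, Fin 1, Fin 1] i) :=
  SimpleGraph.completeMultipartiteGraph ![Fin 3, Fin 3, Fin 1, Fin 1]

/-- The graph on 10 vertices obtained from the triangular prism (triangles
`v1v3v5 = {0,2,4}`, `v2v4v6 = {1,3,5}`, edge `v5v6 = (4,5)`) by subdividing the edge
`v1v2` twice via `v1–a–b–v2 = 0–6–7–1` and the edge `v3v4` twice via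
`v3–c–d–v4 = 2–8–9–3`. -/
def prismB : SimpleGraph (Fin 10) :=
  SimpleGraph.fromRel (fun i j =>
    ((i, j) : Fin 10 × Fin 10) ∈
      ([(0, 2), (2, 4), (0, 4), (1, 3), (3, 5), (1, 5),
        (4, 5), (0, 6), (6, 7), (7, 1), (2, 8), (8, 9), (9, 3)] : List (Fin 10 × Fin 10)))

instance : DecidableRel prismB.Adj := fun a b =>
  decidable_of_iff _ (SimpleGraph.fromRel_adj _ a b).symm

instance : DecidableRel prismBᶜ.Adj := fun a b =>
  decidable_of_iff (a ≠ b ∧ ¬ prismB.Adj a b) Iff.rfl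

private lemma induce_singleton_connected {α : Type*} (G : SimpleGraph α) (a : α) :
    (G.induce {a}).Connected := by
  haveI : Nonempty (↥({a} : Set α)) := ⟨⟨a, rfl⟩⟩
  refine ⟨fun u v => ?_⟩
  have : u = v := Subtype.ext (u.2.trans v.2.symm)
  exact this ▸ SimpleGraph.Reachable.refl u

private lemma induce_pair_connected {α : Type*} (G : SimpleGraph α) {a b : α} (h : G.Adj a b) :
    (G.induce {a, b}).Connected := by
  haveI : Nonempty (↥({a, b} : Set α)) := ⟨⟨a, Or.inl rfl⟩⟩
  refine ⟨fun u v => ?_⟩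
  have key : ∀ w : ({a, b} : Set α), (G.induce {a, b}).Reachable ⟨a, Or.inl rfl⟩ w := by
    rintro ⟨w, hw | hw⟩
    · subst hw; exact SimpleGraph.Reachable.refl _
    · subst hw; exact SimpleGraph.Adj.reachable h
  exact (key u).symm.trans (key v)

private lemma cases8 {P : (i : Fin 4) × ![Fin 3, Fin 3, Fin 1, Fin 1] i → Prop}
    (h00 : P ⟨0, (0 : Fin 3)⟩) (h01 : P ⟨0, (1 : Fin 3)⟩) (h02 : P ⟨0, (2 : Fin 3)⟩)
    (h10 : P ⟨1, (0 : Fin 3)⟩) (h11 : P ⟨1, (1 : Fin 3)⟩) (h12 : P ⟨1, (2 : Fin 3)⟩)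
    (h20 : P ⟨2, (0 : Fin 1)⟩) (h30 : P ⟨3, (0 : Fin 1)⟩) : ∀ b, P b := by
  rintro ⟨i, j⟩
  fin_cases i
  · revert j; exact Fin.cases h00 (Fin.cases h01 (Fin.cases h02 (fun x => x.elim0)))
  · revert j; exact Fin.cases h10 (Fin.cases h11 (Fin.cases h12 (fun x => x.elim0)))
  · revert j; exact Fin.cases h20 (fun x => x.elim0)
  · revert j; exact Fin.cases h30 (fun x => x.elim0)

private def bs : (i : Fin 4) × ![Fin 3, Fin 3, Fin 1, Fin 1] i → Set (Fin 10) := fun b =>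
  Fin.cases (motive := fun i => ![Fin 3, Fin 3, Fin 1, Fin 1] i → Set (Fin 10))
    ![{4}, {5}, {1}]
    (Fin.cases (motive := fun i => ![Fin 3, Fin 1, Fin 1] i → Set (Fin 10))
      ![{6}, {8}, {9}]
      (Fin.cases (motive := fun i => ![Fin 1, Fin 1] i → Set (Fin 10))
        (fun _ => {0, 3})
        (Fin.cases (motive := fun i => ![Fin 1] i → Set (Fin 10))
          (fun _ => {2, 7}) (fun x => x.elim0)))) b.1 b.2

/-- The complement of the elongated prism obtained by subdividing two non-triangular
edges twice each contains a `K_{3,3,1,1}` minor. -/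
theorem prismB_compl_K3311_minor : prismBᶜ.HasMinor K3311 := by
  refine ⟨bs, ?_, ?_, ?_, ?_⟩
  · -- nonempty
    refine cases8 ?_ ?_ ?_ ?_ ?_ ?_ ?_ ?_
    · exact ⟨4, rfl⟩
    · exact ⟨5, rfl⟩
    · exact ⟨1, rfl⟩
    · exact ⟨6, rfl⟩
    · exact ⟨8, rfl⟩
    · exact ⟨9, rfl⟩
    · exact ⟨0, Or.inl rfl⟩
    · exact ⟨2, Or.inl rfl⟩
  · -- connected
    refine cases8 ?_ ?_ ?_ ?_ ?_ ?_ ?_ ?_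
    · exact induce_singleton_connected _ 4
    · exact induce_singleton_connected _ 5
    · exact induce_singleton_connected _ 1
    · exact induce_singleton_connected _ 6
    · exact induce_singleton_connected _ 8
    · exact induce_singleton_connected _ 9
    · exact induce_pair_connected _ (show prismBᶜ.Adj 0 3 by decide)
    · exact induce_pair_connected _ (show prismBᶜ.Adj 2 7 by decide)
  · -- disjoint
    refine cases8 ?_ ?_ ?_ ?_ ?_ ?_ ?_ ?_ <;> refine cases8 ?_ ?_ ?_ ?_ ?_ ?_ ?_ ?_
    · exact fun h => absurd rfl h
    · exact fun _ => show Disjoint ({4} : Set (Fin 10)) {5} by simp [Set.disjoint_left]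
    · exact fun _ => show Disjoint ({4} : Set (Fin 10)) {1} by simp [Set.disjoint_left]
    · exact fun _ => show Disjoint ({4} : Set (Fin 10)) {6} by simp [Set.disjoint_left]
    · exact fun _ => show Disjoint ({4} : Set (Fin 10)) {8} by simp [Set.disjoint_left]
    · exact fun _ => show Disjoint ({4} : Set (Fin 10)) {9} by simp [Set.disjoint_left]
    · exact fun _ => show Disjoint ({4} : Set (Fin 10)) {0, 3} by simp [Set.disjoint_left]
    · exact fun _ => show Disjoint ({4} : Set (Fin 10)) {2, 7} by simp [Set.disjoint_left]
    · exact fun _ => show Disjoint ({5} : Set (Fin 10)) {4} by simp [Set.disjoint_left]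
    · exact fun h => absurd rfl h
    · exact fun _ => show Disjoint ({5} : Set (Fin 10)) {1} by simp [Set.disjoint_left]
    · exact fun _ => show Disjoint ({5} : Set (Fin 10)) {6} by simp [Set.disjoint_left]
    · exact fun _ => show Disjoint ({5} : Set (Fin 10)) {8} by simp [Set.disjoint_left]
    · exact fun _ => show Disjoint ({5} : Set (Fin 10)) {9} by simp [Set.disjoint_left]
    · exact fun _ => show Disjoint ({5} : Set (Fin 10)) {0, 3} by simp [Set.disjoint_left]
    · exact fun _ => show Disjoint ({5} : Set (Fin 10)) {2, 7} by simp [Set.disjoint_left]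
    · exact fun _ => show Disjoint ({1} : Set (Fin 10)) {4} by simp [Set.disjoint_left]
    · exact fun _ => show Disjoint ({1} : Set (Fin 10)) {5} by simp [Set.disjoint_left]
    · exact fun h => absurd rfl h
    · exact fun _ => show Disjoint ({1} : Set (Fin 10)) {6} by simp [Set.disjoint_left]
    · exact fun _ => show Disjoint ({1} : Set (Fin 10)) {8} by simp [Set.disjoint_left]
    · exact fun _ => show Disjoint ({1} : Set (Fin 10)) {9} by simp [Set.disjoint_left]
    · exact fun _ => show Disjoint ({1} : Set (Fin 10)) {0, 3} by simp [Set.disjoint_left]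
    · exact fun _ => show Disjoint ({1} : Set (Fin 10)) {2, 7} by simp [Set.disjoint_left]
    · exact fun _ => show Disjoint ({6} : Set (Fin 10)) {4} by simp [Set.disjoint_left]
    · exact fun _ => show Disjoint ({6} : Set (Fin 10)) {5} by simp [Set.disjoint_left]
    · exact fun _ => show Disjoint ({6} : Set (Fin 10)) {1} by simp [Set.disjoint_left]
    · exact fun h => absurd rfl h
    · exact fun _ => show Disjoint ({6} : Set (Fin 10)) {8} by simp [Set.disjoint_left]
    · exact fun _ => show Disjoint ({6} : Set (Fin 10)) {9} by simp [Set.disjoint_left]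
    · exact fun _ => show Disjoint ({6} : Set (Fin 10)) {0, 3} by simp [Set.disjoint_left]
    · exact fun _ => show Disjoint ({6} : Set (Fin 10)) {2, 7} by simp [Set.disjoint_left]
    · exact fun _ => show Disjoint ({8} : Set (Fin 10)) {4} by simp [Set.disjoint_left]
    · exact fun _ => show Disjoint ({8} : Set (Fin 10)) {5} by simp [Set.disjoint_left]
    · exact fun _ => show Disjoint ({8} : Set (Fin 10)) {1} by simp [Set.disjoint_left]
    · exact fun _ => show Disjoint ({8} : Set (Fin 10)) {6} by simp [Set.disjoint_left]
    · exact fun h => absurd rfl h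
    · exact fun _ => show Disjoint ({8} : Set (Fin 10)) {9} by simp [Set.disjoint_left]
    · exact fun _ => show Disjoint ({8} : Set (Fin 10)) {0, 3} by simp [Set.disjoint_left]
    · exact fun _ => show Disjoint ({8} : Set (Fin 10)) {2, 7} by simp [Set.disjoint_left]
    · exact fun _ => show Disjoint ({9} : Set (Fin 10)) {4} by simp [Set.disjoint_left]
    · exact fun _ => show Disjoint ({9} : Set (Fin 10)) {5} by simp [Set.disjoint_left]
    · exact fun _ => show Disjoint ({9} : Set (Fin 10)) {1} by simp [Set.disjoint_left]
    · exact fun _ => show Disjoint ({9} : Set (Fin 10)) {6} by simp [Set.disjoint_left]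
    · exact fun _ => show Disjoint ({9} : Set (Fin 10)) {8} by simp [Set.disjoint_left]
    · exact fun h => absurd rfl h
    · exact fun _ => show Disjoint ({9} : Set (Fin 10)) {0, 3} by simp [Set.disjoint_left]
    · exact fun _ => show Disjoint ({9} : Set (Fin 10)) {2, 7} by simp [Set.disjoint_left]
    · exact fun _ => show Disjoint ({0, 3} : Set (Fin 10)) {4} by simp [Set.disjoint_left]
    · exact fun _ => show Disjoint ({0, 3} : Set (Fin 10)) {5} by simp [Set.disjoint_left]
    · exact fun _ => show Disjoint ({0, 3} : Set (Fin 10)) {1} by simp [Set.disjoint_left]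
    · exact fun _ => show Disjoint ({0, 3} : Set (Fin 10)) {6} by simp [Set.disjoint_left]
    · exact fun _ => show Disjoint ({0, 3} : Set (Fin 10)) {8} by simp [Set.disjoint_left]
    · exact fun _ => show Disjoint ({0, 3} : Set (Fin 10)) {9} by simp [Set.disjoint_left]
    · exact fun h => absurd rfl h
    · exact fun _ => show Disjoint ({0, 3} : Set (Fin 10)) {2, 7} by simp [Set.disjoint_left]
    · exact fun _ => show Disjoint ({2, 7} : Set (Fin 10)) {4} by simp [Set.disjoint_left]
    · exact fun _ => show Disjoint ({2, 7} : Set (Fin 10)) {5} by simp [Set.disjoint_left]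
    · exact fun _ => show Disjoint ({2, 7} : Set (Fin 10)) {1} by simp [Set.disjoint_left]
    · exact fun _ => show Disjoint ({2, 7} : Set (Fin 10)) {6} by simp [Set.disjoint_left]
    · exact fun _ => show Disjoint ({2, 7} : Set (Fin 10)) {8} by simp [Set.disjoint_left]
    · exact fun _ => show Disjoint ({2, 7} : Set (Fin 10)) {9} by simp [Set.disjoint_left]
    · exact fun _ => show Disjoint ({2, 7} : Set (Fin 10)) {0, 3} by simp [Set.disjoint_left]
    · exact fun h => absurd rfl h
  · -- edges
    refine cases8 ?_ ?_ ?_ ?_ ?_ ?_ ?_ ?_ <;> refine cases8 ?_ ?_ ?_ ?_ ?_ ?_ ?_ ?_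
    · exact fun h => absurd rfl h
    · exact fun h => absurd rfl h
    · exact fun h => absurd rfl h
    · exact fun _ => ⟨4, rfl, 6, rfl, by decide⟩
    · exact fun _ => ⟨4, rfl, 8, rfl, by decide⟩
    · exact fun _ => ⟨4, rfl, 9, rfl, by decide⟩
    · exact fun _ => ⟨4, rfl, 3, Or.inr rfl, by decide⟩
    · exact fun _ => ⟨4, rfl, 7, Or.inr rfl, by decide⟩
    · exact fun h => absurd rfl h
    · exact fun h => absurd rfl h
    · exact fun h => absurd rfl h
    · exact fun _ => ⟨5, rfl, 6, rfl, by decide⟩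
    · exact fun _ => ⟨5, rfl, 8, rfl, by decide⟩
    · exact fun _ => ⟨5, rfl, 9, rfl, by decide⟩
    · exact fun _ => ⟨5, rfl, 0, Or.inl rfl, by decide⟩
    · exact fun _ => ⟨5, rfl, 2, Or.inl rfl, by decide⟩
    · exact fun h => absurd rfl h
    · exact fun h => absurd rfl h
    · exact fun h => absurd rfl h
    · exact fun _ => ⟨1, rfl, 6, rfl, by decide⟩
    · exact fun _ => ⟨1, rfl, 8, rfl, by decide⟩
    · exact fun _ => ⟨1, rfl, 9, rfl, by decide⟩
    · exact fun _ => ⟨1, rfl, 0, Or.inl rfl, by decide⟩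
    · exact fun _ => ⟨1, rfl, 2, Or.inl rfl, by decide⟩
    · exact fun _ => ⟨6, rfl, 4, rfl, by decide⟩
    · exact fun _ => ⟨6, rfl, 5, rfl, by decide⟩
    · exact fun _ => ⟨6, rfl, 1, rfl, by decide⟩
    · exact fun h => absurd rfl h
    · exact fun h => absurd rfl h
    · exact fun h => absurd rfl h
    · exact fun _ => ⟨6, rfl, 3, Or.inr rfl, by decide⟩
    · exact fun _ => ⟨6, rfl, 2, Or.inl rfl, by decide⟩
    · exact fun _ => ⟨8, rfl, 4, rfl, by decide⟩
    · exact fun _ => ⟨8, rfl, 5, rfl, by decide⟩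
    · exact fun _ => ⟨8, rfl, 1, rfl, by decide⟩
    · exact fun h => absurd rfl h
    · exact fun h => absurd rfl h
    · exact fun h => absurd rfl h
    · exact fun _ => ⟨8, rfl, 0, Or.inl rfl, by decide⟩
    · exact fun _ => ⟨8, rfl, 7, Or.inr rfl, by decide⟩
    · exact fun _ => ⟨9, rfl, 4, rfl, by decide⟩
    · exact fun _ => ⟨9, rfl, 5, rfl, by decide⟩
    · exact fun _ => ⟨9, rfl, 1, rfl, by decide⟩
    · exact fun h => absurd rfl h
    · exact fun h => absurd rfl h
    · exact fun h => absurd rfl h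
    · exact fun _ => ⟨9, rfl, 0, Or.inl rfl, by decide⟩
    · exact fun _ => ⟨9, rfl, 2, Or.inl rfl, by decide⟩
    · exact fun _ => ⟨3, Or.inr rfl, 4, rfl, by decide⟩
    · exact fun _ => ⟨0, Or.inl rfl, 5, rfl, by decide⟩
    · exact fun _ => ⟨0, Or.inl rfl, 1, rfl, by decide⟩
    · exact fun _ => ⟨3, Or.inr rfl, 6, rfl, by decide⟩
    · exact fun _ => ⟨0, Or.inl rfl, 8, rfl, by decide⟩
    · exact fun _ => ⟨0, Or.inl rfl, 9, rfl, by decide⟩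
    · exact fun h => absurd rfl h
    · exact fun _ => ⟨0, Or.inl rfl, 7, Or.inr rfl, by decide⟩
    · exact fun _ => ⟨7, Or.inr rfl, 4, rfl, by decide⟩
    · exact fun _ => ⟨2, Or.inl rfl, 5, rfl, by decide⟩
    · exact fun _ => ⟨2, Or.inl rfl, 1, rfl, by decide⟩
    · exact fun _ => ⟨2, Or.inl rfl, 6, rfl, by decide⟩
    · exact fun _ => ⟨7, Or.inr rfl, 8, rfl, by decide⟩
    · exact fun _ => ⟨2, Or.inl rfl, 9, rfl, by decide⟩
    · exact fun _ => ⟨2, Or.inl rfl, 3, Or.inr rfl, by decide⟩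
    · exact fun h => absurd rfl h
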